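/- arXiv:1307.0046 — 2 statements merged into one kernel-verified Lean document; each statement's English description precedes it below -/
import Mathlib

section
/- Let μ ∈ ℝ. For every t > 0 and x ≥ 0: ∫₀^∞ G(t;x,y) dy = 1. -/
open MeasureTheory Set Filter

/-- Standard normal density. -/
noncomputable def phi (x : ℝ) : ℝ := (1 / Real.sqrt (2 * Real.pi)) * Real.exp (-x ^ 2 / 2)

/-- Standard normal tail function. -/
noncomputable def Psi (x : ℝ) : ℝ := ∫ y in Set.Ioi x, phi y

/-- The kernel `G(t;x,y)` with drift parameter `μ`. -/
noncomputable def Gker (μ t x y : ℝ) : ℝ :=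
  (1 / Real.sqrt t) *
      (Real.exp (2 * μ * y) * phi ((x + y + μ * t) / Real.sqrt t) +
        phi ((x - y + μ * t) / Real.sqrt t)) -
    2 * μ * Real.exp (2 * μ * y) * Psi ((x + y + μ * t) / Real.sqrt t)

/-- The kernel `H(t;x,y)` with parameters `μ, ν`. -/
noncomputable def Hker (μ ν t x y : ℝ) : ℝ :=
  if ν = μ then
    2 * Real.exp (2 * μ * y) *
      ((1 + μ * (x + y + μ * t)) * Psi ((x + y + μ * t) / Real.sqrt t) -
        μ * Real.sqrt t * phi ((x + y + μ * t) / Real.sqrt t))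
  else
    Real.exp (2 * μ * y) / (ν - μ) *
      ((2 * ν - μ) * Real.exp (2 * (ν - μ) * (x + y + ν * t)) *
          Psi ((x + y + (2 * ν - μ) * t) / Real.sqrt t) -
        μ * Psi ((x + y + μ * t) / Real.sqrt t))

/-- The density `g(t;b,s)` of `(B_t^{-μ}, S_t^{-μ})`, vanishing off `{b ≤ s, 0 ≤ s}`. -/
noncomputable def gker (μ t b s : ℝ) : ℝ :=
  if b ≤ s ∧ 0 ≤ s then
    Real.sqrt (2 / Real.pi) * t ^ (-(3 : ℝ) / 2) * (2 * s - b) *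
      Real.exp (-(2 * s - b) ^ 2 / (2 * t) - μ * (b + μ * t / 2))
  else 0

/-- Spatial derivative (one-sided at `x = 0`). -/
noncomputable def ux (u : ℝ → ℝ → ℝ) (t x : ℝ) : ℝ :=
  derivWithin (fun z => u t z) (Set.Ici 0) x

/-- Second spatial derivative (one-sided at `x = 0`). -/
noncomputable def uxx (u : ℝ → ℝ → ℝ) (t x : ℝ) : ℝ :=
  derivWithin (fun z => ux u t z) (Set.Ici 0) x

/-- Time derivative. -/
noncomputable def ut (u : ℝ → ℝ → ℝ) (t x : ℝ) : ℝ :=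
  deriv (fun s => u s x) t

/-- `u` is a solution of the Stroock–Williams problem with parameters `μ, ν`
and initial data `f`. -/
def IsSWSolution (μ ν : ℝ) (f : ℝ → ℝ) (u : ℝ → ℝ → ℝ) : Prop :=
  ContDiffOn ℝ (⊤ : ℕ∞) (fun p : ℝ × ℝ => u p.1 p.2) (Set.Ioi 0 ×ˢ Set.Ici 0) ∧
  (∀ T > (0 : ℝ),
    ContinuousOn (fun p : ℝ × ℝ => u p.1 p.2) (Set.Icc 0 T ×ˢ Set.Ici 0) ∧
    ContinuousOn (fun p : ℝ × ℝ => ux u p.1 p.2) (Set.Icc 0 T ×ˢ Set.Ici 0) ∧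
    ∃ C : ℝ, ∀ p ∈ Set.Icc (0 : ℝ) T ×ˢ Set.Ici (0 : ℝ),
      |u p.1 p.2| ≤ C ∧ |ux u p.1 p.2| ≤ C) ∧
  (∀ t > (0 : ℝ), Filter.Tendsto (fun x => u t x) Filter.atTop (nhds 0)) ∧
  (∀ t > (0 : ℝ), ∀ x ≥ (0 : ℝ), ut u t x = μ * ux u t x + (1 / 2) * uxx u t x) ∧
  (∀ x ≥ (0 : ℝ), u 0 x = f x) ∧
  (∀ t > (0 : ℝ), ut u t 0 = ν * ux u t 0)

/-- `f` is admissible initial data: `C¹` on `[0,∞)` with `f` and `f'` bounded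
and `f(x) → 0` as `x → ∞`. -/
def IsInitialData (f : ℝ → ℝ) : Prop :=
  ContDiffOn ℝ 1 f (Set.Ici 0) ∧
  (∃ C : ℝ, ∀ x ∈ Set.Ici (0 : ℝ), |f x| ≤ C ∧ |derivWithin f (Set.Ici 0) x| ≤ C) ∧
  Filter.Tendsto f Filter.atTop (nhds 0)

/-! ### Auxiliary lemmas -/

lemma phi_continuous : Continuous phi := by
  unfold phi; continuity

lemma phi_nonneg (x : ℝ) : 0 ≤ phi x := by
  unfold phi; positivity

lemma phi_integrable : Integrable phi := by
  have : Integrable (fun x : ℝ => Real.exp (-(1/2) * x ^ 2)) :=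
    integrable_exp_neg_mul_sq (by norm_num)
  have h := this.const_mul (1 / Real.sqrt (2 * Real.pi))
  refine h.congr (Eventually.of_forall fun x => ?_)
  unfold phi; ring_nf

lemma phi_integral : ∫ x : ℝ, phi x = 1 := by
  unfold phi
  rw [integral_const_mul]
  have : ∀ x : ℝ, Real.exp (-x ^ 2 / 2) = Real.exp (-(1/2) * x ^ 2) := fun x => by ring_nf
  simp_rw [this, integral_gaussian]
  have h2 : Real.pi / (1/2) = 2 * Real.pi := by ring
  rw [h2]
  have hpos : 0 < Real.sqrt (2 * Real.pi) := Real.sqrt_pos.mpr (by positivity)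
  field_simp

lemma phi_le (c w : ℝ) : phi w ≤ Real.exp (c^2/2) * Real.exp (-c*w) := by
  unfold phi
  have h1 : (1 : ℝ) / Real.sqrt (2 * Real.pi) ≤ 1 := by
    rw [div_le_one (Real.sqrt_pos.mpr (by positivity))]
    have : (1:ℝ) ≤ 2 * Real.pi := by nlinarith [Real.pi_gt_three]
    nlinarith [Real.sq_sqrt (by positivity : (0:ℝ) ≤ 2 * Real.pi),
      Real.sqrt_nonneg (2*Real.pi)]
  calc (1 / Real.sqrt (2 * Real.pi)) * Real.exp (-w ^ 2 / 2)
      ≤ 1 * Real.exp (-w^2/2) := mul_le_mul_of_nonneg_right h1 (Real.exp_nonneg _)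
    _ = Real.exp (-w^2/2) := one_mul _
    _ ≤ Real.exp (c^2/2) * Real.exp (-c*w) := by
        rw [← Real.exp_add]
        apply Real.exp_le_exp.mpr
        nlinarith [sq_nonneg (w - c)]

lemma psi_nonneg (z : ℝ) : 0 ≤ Psi z :=
  setIntegral_nonneg measurableSet_Ioi fun x _ => phi_nonneg x

lemma integral_exp_neg_mul_Ioi {c : ℝ} (hc : 0 < c) (z : ℝ) :
    ∫ y in Ioi z, Real.exp (-c*y) = Real.exp (-c*z) / c := by
  have hderiv : ∀ y ∈ Ici z, HasDerivAt (fun y => -Real.exp (-c*y)/c) (Real.exp (-c*y)) y := by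
    intro y _
    have h1 : HasDerivAt (fun y : ℝ => -c*y) (-c) y := by
      simpa using (hasDerivAt_id y).const_mul (-c)
    have h2 := (h1.exp.neg).div_const c
    refine h2.congr_deriv ?_
    rw [div_eq_iff hc.ne']; ring
  have htend : Tendsto (fun y => -Real.exp (-c*y)/c) atTop (nhds 0) := by
    have h1 : Tendsto (fun y : ℝ => -c*y) atTop atBot :=
      Tendsto.const_mul_atTop_of_neg (neg_neg_iff_pos.mpr hc) tendsto_id
    have h2 := (Real.tendsto_exp_atBot.comp h1).neg.div_const c
    simpa using h2
  have := integral_Ioi_of_hasDerivAt_of_tendsto' hderiv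
    (exp_neg_integrableOn_Ioi z hc) htend
  rw [this]; ring

lemma psi_le {c : ℝ} (hc : 0 < c) (z : ℝ) :
    Psi z ≤ Real.exp (c^2/2) / c * Real.exp (-c*z) := by
  have hint : IntegrableOn (fun y => Real.exp (c^2/2) * Real.exp (-c*y)) (Ioi z) :=
    (exp_neg_integrableOn_Ioi z hc).const_mul _
  have h : Psi z ≤ ∫ y in Ioi z, Real.exp (c^2/2) * Real.exp (-c*y) :=
    setIntegral_mono_on (phi_integrable.integrableOn) hint measurableSet_Ioi
      (fun y _ => phi_le c y)
  calc Psi z ≤ ∫ y in Ioi z, Real.exp (c^2/2) * Real.exp (-c*y) := h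
    _ = Real.exp (c^2/2) * (Real.exp (-c*z) / c) := by
        rw [integral_const_mul, integral_exp_neg_mul_Ioi hc]
    _ = Real.exp (c^2/2) / c * Real.exp (-c*z) := by ring

lemma psi_eq (z : ℝ) : Psi z = 1 - ∫ y in Iic z, phi y := by
  have h := integral_add_compl (measurableSet_Iic (a := z)) phi_integrable (f := phi)
  rw [compl_Iic, phi_integral] at h
  unfold Psi; linarith

lemma hasDerivAt_psi (z : ℝ) : HasDerivAt Psi (-phi z) z := by
  have heq : ∀ w : ℝ, Psi w = 1 - ((∫ y in Iic (0:ℝ), phi y) + ∫ y in (0:ℝ)..w, phi y) := by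
    intro w
    rw [psi_eq]
    have := intervalIntegral.integral_Iic_sub_Iic (phi_integrable.integrableOn (s := Iic (0:ℝ)))
      (phi_integrable.integrableOn (s := Iic w))
    linarith
  have hI : HasDerivAt (fun w => ∫ y in (0:ℝ)..w, phi y) (phi z) z :=
    intervalIntegral.integral_hasDerivAt_right
      (phi_continuous.intervalIntegrable _ _)
      (phi_continuous.stronglyMeasurableAtFilter _ _)
      phi_continuous.continuousAt
  have h2 : HasDerivAt
      (fun w => 1 - ((∫ y in Iic (0:ℝ), phi y) + ∫ y in (0:ℝ)..w, phi y)) (-phi z) z := by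
    simpa using ((hI.const_add (∫ y in Iic (0:ℝ), phi y)).const_sub 1)
  exact h2.congr_of_eventuallyEq (Eventually.of_forall heq)

lemma psi_continuous : Continuous Psi :=
  continuous_iff_continuousAt.mpr fun z => (hasDerivAt_psi z).continuousAt

lemma psi_tendsto_atTop : Tendsto Psi atTop (nhds 0) := by
  have ht : Tendsto (fun z : ℝ => (-1:ℝ)*z) atTop atBot :=
    Tendsto.const_mul_atTop_of_neg (by norm_num) tendsto_id
  have h0 : Tendsto (fun z : ℝ => Real.exp ((-1:ℝ)*z)) atTop (nhds 0) :=
    Real.tendsto_exp_atBot.comp ht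
  have h1 : Tendsto (fun z : ℝ => Real.exp ((1:ℝ)^2/2) / 1 * Real.exp ((-1:ℝ)*z)) atTop
      (nhds (Real.exp ((1:ℝ)^2/2) / 1 * 0)) := h0.const_mul _
  rw [mul_zero] at h1
  refine tendsto_of_tendsto_of_tendsto_of_le_of_le tendsto_const_nhds h1
    (fun z => psi_nonneg z) (fun z => ?_)
  simpa using psi_le one_pos z

lemma psi_neg (z : ℝ) : Psi (-z) = ∫ y in Iic z, phi y := by
  unfold Psi
  have h : ∀ x : ℝ, phi x = phi (-x) := by
    intro x; unfold phi; rw [neg_pow]; ring_nf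
  calc ∫ y in Ioi (-z), phi y = ∫ y in Ioi (-z), phi (-y) :=
        setIntegral_congr_fun measurableSet_Ioi (fun y _ => h y)
    _ = ∫ y in Iic z, phi y := by rw [integral_comp_neg_Ioi]; norm_num

lemma psi_tendsto_atBot : Tendsto Psi atBot (nhds 1) := by
  have h : ∀ z : ℝ, Psi z = 1 - Psi (-z) := fun z => by rw [psi_eq, psi_neg]
  have h2 : Tendsto (fun z : ℝ => 1 - Psi (-z)) atBot (nhds (1 - 0)) :=
    (Tendsto.comp psi_tendsto_atTop tendsto_neg_atBot_atTop).const_sub 1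
  simpa using h2.congr (fun z => (h z).symm)

lemma hasDerivAt_F (μ t x : ℝ) (ht : 0 < t) (y : ℝ) :
    HasDerivAt (fun y => Psi ((x - y + μ * t) / Real.sqrt t)
      - Real.exp (2 * μ * y) * Psi ((x + y + μ * t) / Real.sqrt t))
      (Gker μ t x y) y := by
  have hs : 0 < Real.sqrt t := Real.sqrt_pos.mpr ht
  have hb : HasDerivAt (fun y => (x - y + μ * t) / Real.sqrt t) (-1 / Real.sqrt t) y := by
    have h1 : HasDerivAt (fun y : ℝ => x - y + μ * t) (-1) y := by
      simpa using (((hasDerivAt_id y).const_sub x).add_const (μ * t))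
    exact h1.div_const _
  have ha : HasDerivAt (fun y => (x + y + μ * t) / Real.sqrt t) (1 / Real.sqrt t) y := by
    have h1 : HasDerivAt (fun y : ℝ => x + y + μ * t) 1 y := by
      simpa using (((hasDerivAt_id y).const_add x).add_const (μ * t))
    exact h1.div_const _
  have hPb : HasDerivAt (fun y => Psi ((x - y + μ * t) / Real.sqrt t))
      (-phi ((x - y + μ * t) / Real.sqrt t) * (-1 / Real.sqrt t)) y :=
    (hasDerivAt_psi _).comp y hb
  have hPa : HasDerivAt (fun y => Psi ((x + y + μ * t) / Real.sqrt t))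
      (-phi ((x + y + μ * t) / Real.sqrt t) * (1 / Real.sqrt t)) y :=
    (hasDerivAt_psi _).comp y ha
  have hE : HasDerivAt (fun y : ℝ => Real.exp (2 * μ * y))
      (Real.exp (2 * μ * y) * (2 * μ)) y := by
    have h1 : HasDerivAt (fun y : ℝ => 2 * μ * y) (2 * μ) y := by
      simpa using (hasDerivAt_id y).const_mul (2 * μ)
    exact h1.exp
  have h := hPb.sub (hE.mul hPa)
  refine h.congr_deriv ?_
  unfold Gker
  field_simp
  ring

lemma aux_bounds (μ t x : ℝ) (ht : 0 < t) :
    ∃ K1 K2 K3 : ℝ, 0 ≤ K1 ∧ 0 ≤ K2 ∧ 0 ≤ K3 ∧ ∀ y ≥ (0:ℝ),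
      Real.exp (2*μ*y) * phi ((x + y + μ*t)/Real.sqrt t)
          ≤ K1 * Real.exp (-(1/Real.sqrt t)*y) ∧
      phi ((x - y + μ*t)/Real.sqrt t) ≤ K2 * Real.exp (-(1/Real.sqrt t)*y) ∧
      Real.exp (2*μ*y) * Psi ((x + y + μ*t)/Real.sqrt t)
          ≤ K3 * Real.exp (-(1/Real.sqrt t)*y) := by
  have hs : 0 < Real.sqrt t := Real.sqrt_pos.mpr ht
  set s := Real.sqrt t with hsdef
  set c : ℝ := 2 * max μ 0 * s + 1 with hcdef
  have hc : 0 < c := by nlinarith [le_max_right μ (0:ℝ), hs]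
  have hc1 : 1 ≤ c := by nlinarith [le_max_right μ (0:ℝ), hs]
  refine ⟨Real.exp (c^2/2) * Real.exp (-c*(x+μ*t)/s),
    Real.exp (c^2/2) * Real.exp (c*(x+μ*t)/s),
    Real.exp (c^2/2) / c * Real.exp (-c*(x+μ*t)/s),
    by positivity, by positivity, by positivity, ?_⟩
  intro y hy
  have hexpA : 2*μ*y + (-c*((x + y + μ*t)/s)) ≤ -c*(x+μ*t)/s + (-(1/s)*y) := by
    have hkey : c*((x + y + μ*t)/s) = c*(x+μ*t)/s + (2 * max μ 0)*y + y/s := by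
      field_simp
      ring
    have h2 : μ * y ≤ max μ 0 * y := mul_le_mul_of_nonneg_right (le_max_left μ 0) hy
    rw [neg_mul, hkey]
    have h3 : (1/s)*y = y/s := by ring
    have h4 : -c*(x+μ*t)/s = -(c*(x+μ*t)/s) := by ring
    linarith
  have hexpB : c*((x - y + μ*t)/s) ≤ c*(x+μ*t)/s + (-(1/s)*y) := by
    have hkey : c*((x - y + μ*t)/s) = c*(x+μ*t)/s - (c/s)*y := by
      field_simp; ring
    rw [hkey]
    have h1 : (1/s)*y ≤ (c/s)*y := by
      apply mul_le_mul_of_nonneg_right _ hy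
      gcongr
    linarith
  refine ⟨?_, ?_, ?_⟩
  · calc Real.exp (2*μ*y) * phi ((x + y + μ*t)/s)
        ≤ Real.exp (2*μ*y) * (Real.exp (c^2/2) * Real.exp (-c*((x + y + μ*t)/s))) :=
          mul_le_mul_of_nonneg_left (phi_le c _) (Real.exp_nonneg _)
      _ = Real.exp (c^2/2) * Real.exp (2*μ*y + (-c*((x + y + μ*t)/s))) := by
          rw [Real.exp_add]; ring
      _ ≤ Real.exp (c^2/2) * Real.exp (-c*(x+μ*t)/s + (-(1/s)*y)) :=
          mul_le_mul_of_nonneg_left (Real.exp_le_exp.mpr hexpA) (Real.exp_nonneg _)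
      _ = Real.exp (c^2/2) * Real.exp (-c*(x+μ*t)/s) * Real.exp (-(1/s)*y) := by
          rw [Real.exp_add]; ring
  · calc phi ((x - y + μ*t)/s)
        ≤ Real.exp ((-c)^2/2) * Real.exp (-(-c)*((x - y + μ*t)/s)) := phi_le (-c) _
      _ = Real.exp (c^2/2) * Real.exp (c*((x - y + μ*t)/s)) := by ring_nf
      _ ≤ Real.exp (c^2/2) * Real.exp (c*(x+μ*t)/s + (-(1/s)*y)) :=
          mul_le_mul_of_nonneg_left (Real.exp_le_exp.mpr hexpB) (Real.exp_nonneg _)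
      _ = Real.exp (c^2/2) * Real.exp (c*(x+μ*t)/s) * Real.exp (-(1/s)*y) := by
          rw [Real.exp_add]; ring
  · calc Real.exp (2*μ*y) * Psi ((x + y + μ*t)/s)
        ≤ Real.exp (2*μ*y) * (Real.exp (c^2/2) / c * Real.exp (-c*((x + y + μ*t)/s))) :=
          mul_le_mul_of_nonneg_left (psi_le hc _) (Real.exp_nonneg _)
      _ = Real.exp (c^2/2) / c * Real.exp (2*μ*y + (-c*((x + y + μ*t)/s))) := by
          rw [Real.exp_add]; ring
      _ ≤ Real.exp (c^2/2) / c * Real.exp (-c*(x+μ*t)/s + (-(1/s)*y)) := by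
          apply mul_le_mul_of_nonneg_left (Real.exp_le_exp.mpr hexpA)
          positivity
      _ = Real.exp (c^2/2) / c * Real.exp (-c*(x+μ*t)/s) * Real.exp (-(1/s)*y) := by
          rw [Real.exp_add]; ring

/-- the kernel `G(t;x,·)` is a probability density on `[0,∞)`. -/
theorem G_integral_eq_one (μ : ℝ) :
    ∀ t > (0 : ℝ), ∀ x ≥ (0 : ℝ),
      (∫ y in Set.Ioi (0 : ℝ), Gker μ t x y) = 1 := by
  intro t ht x hx
  have hs : 0 < Real.sqrt t := Real.sqrt_pos.mpr ht
  obtain ⟨K1, K2, K3, hK1, hK2, hK3, hb⟩ := aux_bounds μ t x ht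
  -- continuity of the integrand
  have hGcont : Continuous (fun y => Gker μ t x y) := by
    unfold Gker
    have h1 := phi_continuous
    have h2 := psi_continuous
    fun_prop
  -- integrability
  have hint : IntegrableOn (fun y => Gker μ t x y) (Ioi 0) := by
    have hg : IntegrableOn
        (fun y => ((1/Real.sqrt t)*(K1+K2) + 2 * |μ| * K3) * Real.exp (-(1/Real.sqrt t)*y))
        (Ioi (0:ℝ)) :=
      (exp_neg_integrableOn_Ioi 0 (by positivity)).const_mul _
    refine Integrable.mono' hg hGcont.aestronglyMeasurable.restrict ?_
    filter_upwards [ae_restrict_mem measurableSet_Ioi] with y hy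
    obtain ⟨h1, h2, h3⟩ := hb y (le_of_lt hy)
    have e0 : (0:ℝ) ≤ Real.exp (-(1/Real.sqrt t)*y) := Real.exp_nonneg _
    rw [Real.norm_eq_abs]
    unfold Gker
    have htri : |(1 / Real.sqrt t) *
        (Real.exp (2 * μ * y) * phi ((x + y + μ * t) / Real.sqrt t) +
          phi ((x - y + μ * t) / Real.sqrt t)) -
        2 * μ * Real.exp (2 * μ * y) * Psi ((x + y + μ * t) / Real.sqrt t)|
        ≤ (1 / Real.sqrt t) *
        (Real.exp (2 * μ * y) * phi ((x + y + μ * t) / Real.sqrt t) +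
          phi ((x - y + μ * t) / Real.sqrt t)) +
        2 * |μ| * (Real.exp (2 * μ * y) * Psi ((x + y + μ * t) / Real.sqrt t)) := by
      refine (abs_sub _ _).trans ?_
      have hA : (0:ℝ) ≤ (1 / Real.sqrt t) *
          (Real.exp (2 * μ * y) * phi ((x + y + μ * t) / Real.sqrt t) +
            phi ((x - y + μ * t) / Real.sqrt t)) := by
        have := phi_nonneg ((x + y + μ * t) / Real.sqrt t)
        have := phi_nonneg ((x - y + μ * t) / Real.sqrt t)
        positivity
      rw [abs_of_nonneg hA]
      have hB : |2 * μ * Real.exp (2 * μ * y) * Psi ((x + y + μ * t) / Real.sqrt t)|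
          = 2 * |μ| * (Real.exp (2 * μ * y) * Psi ((x + y + μ * t) / Real.sqrt t)) := by
        rw [abs_mul, abs_mul, abs_mul, abs_two,
          abs_of_nonneg (Real.exp_nonneg _), abs_of_nonneg (psi_nonneg _)]
        ring
      rw [hB]
    refine htri.trans ?_
    calc (1 / Real.sqrt t) *
        (Real.exp (2 * μ * y) * phi ((x + y + μ * t) / Real.sqrt t) +
          phi ((x - y + μ * t) / Real.sqrt t)) +
        2 * |μ| * (Real.exp (2 * μ * y) * Psi ((x + y + μ * t) / Real.sqrt t))
        ≤ (1 / Real.sqrt t) *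
          (K1 * Real.exp (-(1/Real.sqrt t)*y) + K2 * Real.exp (-(1/Real.sqrt t)*y)) +
          2 * |μ| * (K3 * Real.exp (-(1/Real.sqrt t)*y)) := by
          gcongr
      _ = ((1/Real.sqrt t)*(K1+K2) + 2 * |μ| * K3) * Real.exp (-(1/Real.sqrt t)*y) := by ring
  -- the limit at infinity
  have htend : Tendsto (fun y => Psi ((x - y + μ * t) / Real.sqrt t)
      - Real.exp (2 * μ * y) * Psi ((x + y + μ * t) / Real.sqrt t)) atTop (nhds 1) := by
    have harg : Tendsto (fun y : ℝ => (x - y + μ * t) / Real.sqrt t) atTop atBot := by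
      have h1 : Tendsto (fun y : ℝ => -(1/Real.sqrt t)*y) atTop atBot :=
        Tendsto.const_mul_atTop_of_neg (neg_neg_iff_pos.mpr (by positivity)) tendsto_id
      have h2 : Tendsto (fun y : ℝ => -(1/Real.sqrt t)*y + (x + μ*t)/Real.sqrt t) atTop atBot :=
        tendsto_atBot_add_const_right _ _ h1
      refine h2.congr fun y => ?_
      field_simp
      ring
    have hpart1 : Tendsto (fun y : ℝ => Psi ((x - y + μ * t) / Real.sqrt t)) atTop (nhds 1) :=
      Tendsto.comp psi_tendsto_atBot harg
    have hpart2 : Tendsto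
        (fun y : ℝ => Real.exp (2 * μ * y) * Psi ((x + y + μ * t) / Real.sqrt t))
        atTop (nhds 0) := by
      have hupper : Tendsto (fun y : ℝ => K3 * Real.exp (-(1/Real.sqrt t)*y)) atTop
          (nhds (K3 * 0)) := by
        have h1 : Tendsto (fun y : ℝ => -(1/Real.sqrt t)*y) atTop atBot :=
          Tendsto.const_mul_atTop_of_neg (neg_neg_iff_pos.mpr (by positivity)) tendsto_id
        exact (Real.tendsto_exp_atBot.comp h1).const_mul _
      rw [mul_zero] at hupper
      refine tendsto_of_tendsto_of_tendsto_of_le_of_le' tendsto_const_nhds hupper ?_ ?_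
      · filter_upwards with y
        have := psi_nonneg ((x + y + μ * t) / Real.sqrt t)
        positivity
      · filter_upwards [eventually_ge_atTop (0:ℝ)] with y hy
        exact (hb y hy).2.2
    have := hpart1.sub hpart2
    simpa using this
  have hmain := integral_Ioi_of_hasDerivAt_of_tendsto'
    (f := fun y => Psi ((x - y + μ * t) / Real.sqrt t)
      - Real.exp (2 * μ * y) * Psi ((x + y + μ * t) / Real.sqrt t))
    (fun y _ => hasDerivAt_F μ t x ht y) hint htend
  rw [hmain]
  norm_num
end

section
/- Let μ ∈ ℝ. For every t > 0: ∫₀^∞ ∫_{−∞}^{s} g(t;b,s) db ds = 1. -/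
open MeasureTheory Set Filter

lemma gker_nonneg_aux18 {μ t : ℝ} (ht : 0 < t) (b s : ℝ) : 0 ≤ gker μ t b s := by
  unfold gker
  split_ifs with h
  · have h1 : (0:ℝ) ≤ 2 * s - b := by linarith [h.1, h.2]
    exact mul_nonneg (mul_nonneg (mul_nonneg (Real.sqrt_nonneg _)
      (Real.rpow_nonneg ht.le _)) h1) (Real.exp_nonneg _)
  · exact le_refl 0

lemma gker_measurable_aux18 (μ t : ℝ) : Measurable (fun p : ℝ × ℝ => gker μ t p.1 p.2) := by
  unfold gker
  refine Measurable.ite ?_ (by fun_prop) measurable_const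
  exact (measurableSet_le measurable_fst measurable_snd).inter
    (measurableSet_le measurable_const measurable_snd)

set_option maxHeartbeats 1000000 in
lemma gker_slice_eq_aux18 {μ t : ℝ} (ht : 0 < t) (b : ℝ) :
    Integrable (fun s => gker μ t b s) ∧
    ∫ s, gker μ t b s
      = Real.sqrt (2 / Real.pi) * t ^ (-(3:ℝ)/2) * (t/2) * Real.exp (-(b + μ*t)^2 / (2*t)) := by
  set M := max b 0 with hMdef
  have hM1 : b ≤ M := le_max_left _ _
  have hM2 : (0:ℝ) ≤ M := le_max_right _ _
  set g' : ℝ → ℝ := fun s => (2*s - b) * Real.exp (-(2*s - b)^2/(2*t)) with hg'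
  set G : ℝ → ℝ := fun s => -(t/2) * Real.exp (-(2*s - b)^2/(2*t)) with hG
  have hderiv : ∀ s : ℝ, HasDerivAt G (g' s) s := by
    intro s
    have h1 : HasDerivAt (fun s : ℝ => 2*s - b) 2 s := by
      simpa using ((hasDerivAt_id s).const_mul (2:ℝ)).sub_const b
    have h2 : HasDerivAt (fun s : ℝ => (2*s - b)^2) (2*(2*s - b)*2) s := by
      simpa using h1.fun_pow 2
    have h3 : HasDerivAt (fun s : ℝ => -(2*s - b)^2/(2*t)) (-(2*(2*s - b)*2)/(2*t)) s :=
      (h2.neg).div_const (2*t)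
    have h5 := (h3.exp).const_mul (-(t/2))
    convert h5 using 1
    case e'_4 => rfl
    case e'_5 => rfl
    simp only [hg']
    field_simp
  have htend : Tendsto G atTop (nhds 0) := by
    have ha : Tendsto (fun s : ℝ => 2*s - b) atTop atTop := by
      have := tendsto_atTop_add_const_right atTop (-b)
        (tendsto_id.const_mul_atTop (two_pos (α := ℝ)))
      simpa [sub_eq_add_neg] using this
    have hsq : Tendsto (fun s : ℝ => (2*s - b)^2) atTop atTop :=
      (tendsto_pow_atTop (two_ne_zero)).comp ha
    have h2 : Tendsto (fun s : ℝ => -(2*s - b)^2/(2*t)) atTop atBot := by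
      simpa [neg_div] using hsq.atTop_div_const (by positivity : (0:ℝ) < 2*t)
    have h4 := (Real.tendsto_exp_atBot.comp h2).const_mul (-(t/2))
    rw [hG]
    simpa [Function.comp, neg_mul] using h4
  have hpos : ∀ x ∈ Ioi M, 0 ≤ g' x := by
    intro x hx
    have hx' : M < x := mem_Ioi.mp hx
    exact mul_nonneg (by linarith) (Real.exp_nonneg _)
  have key : ∫ x in Ioi M, g' x = 0 - G M :=
    integral_Ioi_of_hasDerivAt_of_nonneg' (fun x _ => hderiv x) hpos htend
  have keyInt : IntegrableOn g' (Ioi M) :=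
    integrableOn_Ioi_deriv_of_nonneg' (fun x _ => hderiv x) hpos htend
  set C : ℝ := Real.sqrt (2/Real.pi) * t ^ (-(3:ℝ)/2) * Real.exp (-(μ * (b + μ * t / 2)))
    with hC
  have hfun : (fun s => gker μ t b s) = (Ici M).indicator (fun s => C * g' s) := by
    funext s
    simp only [gker, Set.indicator_apply, mem_Ici, hMdef, max_le_iff]
    by_cases h : b ≤ s ∧ 0 ≤ s
    · rw [if_pos h, if_pos h]
      simp only [hC, hg']
      rw [show -(2*s-b)^2/(2*t) - μ*(b + μ*t/2)
          = (-(μ*(b + μ*t/2))) + (-(2*s-b)^2/(2*t)) by ring, Real.exp_add]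
      ring
    · rw [if_neg h, if_neg h]
  have hMb : (2*M - b)^2 = b^2 := by
    rcases le_total b 0 with h | h
    · rw [hMdef, max_eq_right h]; ring
    · rw [hMdef, max_eq_left h]; ring
  have hexp : Real.exp (-(μ * (b + μ * t / 2))) * Real.exp (-b^2/(2*t))
      = Real.exp (-(b + μ*t)^2 / (2*t)) := by
    rw [← Real.exp_add]
    congr 1
    field_simp
    ring
  constructor
  · rw [hfun]
    rw [integrable_indicator_iff measurableSet_Ici]
    exact (integrableOn_Ici_iff_integrableOn_Ioi).2 (keyInt.const_mul C)
  · rw [hfun, integral_indicator measurableSet_Ici, integral_Ici_eq_integral_Ioi,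
      MeasureTheory.integral_const_mul, key]
    simp only [hG, zero_sub, neg_neg, hMb]
    rw [hC, ← hexp]
    ring

set_option maxHeartbeats 1000000 in
/-- `g(t;·,·)` is a probability density. -/
theorem g_integral_eq_one (μ : ℝ) :
    ∀ t > (0 : ℝ),
      (∫ s in Set.Ioi (0 : ℝ), ∫ b in Set.Iic s, gker μ t b s) = 1 := by
  intro t ht
  have hmeas := gker_measurable_aux18 μ t
  have hslice := fun b => gker_slice_eq_aux18 (μ := μ) (t := t) ht b
  -- the double integral is `Integrable` on the product
  have hint : Integrable (Function.uncurry fun b s => gker μ t b s)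
      (volume.prod volume) := by
    have hmeas' : AEStronglyMeasurable (Function.uncurry fun b s => gker μ t b s)
        (volume.prod volume) := hmeas.aestronglyMeasurable
    rw [integrable_prod_iff hmeas']
    constructor
    · exact Filter.Eventually.of_forall fun b => (hslice b).1
    · have heq : (fun b => ∫ s, ‖gker μ t b s‖)
          = fun b => Real.sqrt (2 / Real.pi) * t ^ (-(3:ℝ)/2) * (t/2)
              * Real.exp (-(b + μ*t)^2 / (2*t)) := by
        funext b
        rw [show (fun s => ‖gker μ t b s‖) = fun s => gker μ t b s from
          funext fun s => Real.norm_of_nonneg (gker_nonneg_aux18 ht b s)]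
        exact (hslice b).2
      simp only [Function.uncurry_apply_pair]
      rw [heq]
      have h1 : Integrable (fun x : ℝ => Real.exp (-(1/(2*t)) * x^2)) :=
        integrable_exp_neg_mul_sq (by positivity)
      have h2 := h1.comp_sub_right (-(μ*t))
      have h3 : Integrable (fun b : ℝ => Real.exp (-(b + μ*t)^2 / (2*t))) := by
        refine h2.congr ?_
        filter_upwards with b
        congr 1
        ring
      exact h3.const_mul _
  -- reduce the iterated integral over the region to integrals over all of ℝ
  have h1 : ∀ s : ℝ, (∫ b in Set.Iic s, gker μ t b s) = ∫ b, gker μ t b s := by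
    intro s
    refine setIntegral_eq_integral_of_forall_compl_eq_zero fun b hb => ?_
    rw [gker, if_neg]
    rintro ⟨hbs, -⟩
    exact hb hbs
  have h2 : (∫ s in Set.Ioi (0:ℝ), ∫ b in Set.Iic s, gker μ t b s)
      = ∫ s, ∫ b, gker μ t b s := by
    simp_rw [h1]
    rw [← integral_Ici_eq_integral_Ioi]
    refine setIntegral_eq_integral_of_forall_compl_eq_zero fun s hs => ?_
    have : (fun b => gker μ t b s) = fun _ => 0 := by
      funext b
      rw [gker, if_neg]
      rintro ⟨-, h0s⟩
      exact hs h0s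
    rw [this, integral_zero]
  rw [h2, ← integral_integral_swap hint]
  -- compute the inner integral and then the Gaussian integral
  have h3 : (fun b => ∫ s, gker μ t b s)
      = fun b => Real.sqrt (2 / Real.pi) * t ^ (-(3:ℝ)/2) * (t/2)
          * Real.exp (-(b + μ*t)^2 / (2*t)) := funext fun b => (hslice b).2
  rw [h3]
  rw [MeasureTheory.integral_const_mul]
  have h4 : (∫ b : ℝ, Real.exp (-(b + μ*t)^2 / (2*t)))
      = ∫ b : ℝ, Real.exp (-(1/(2*t)) * b^2) := by
    rw [← integral_add_right_eq_self (fun b : ℝ => Real.exp (-(1/(2*t)) * b^2)) (μ*t)]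
    congr 1
    funext b
    congr 1
    ring
  rw [h4, integral_gaussian]
  -- final numerical computation
  have hπ : (0:ℝ) < Real.pi := Real.pi_pos
  have hs1 : Real.sqrt (2/Real.pi) * Real.sqrt (Real.pi / (1/(2*t))) = 2 * Real.sqrt t := by
    rw [← Real.sqrt_mul (by positivity)]
    rw [show (2/Real.pi) * (Real.pi / (1/(2*t))) = 2^2 * t by field_simp]
    rw [Real.sqrt_mul (by norm_num), Real.sqrt_sq (by norm_num)]
  have hs2 : t * Real.sqrt t = t ^ ((3:ℝ)/2) := by
    rw [show (3:ℝ)/2 = 1 + 1/2 by norm_num, Real.rpow_add ht, Real.rpow_one,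
      Real.sqrt_eq_rpow]
  have hs3 : t ^ (-(3:ℝ)/2) * t ^ ((3:ℝ)/2) = 1 := by
    rw [← Real.rpow_add ht]
    norm_num
  calc Real.sqrt (2/Real.pi) * t ^ (-(3:ℝ)/2) * (t/2) * Real.sqrt (Real.pi / (1/(2*t)))
      = t ^ (-(3:ℝ)/2) * (t * Real.sqrt t) *
          ((Real.sqrt (2/Real.pi) * Real.sqrt (Real.pi / (1/(2*t)))) / (2 * Real.sqrt t))
          := by
        rw [hs1]
        have : Real.sqrt t ≠ 0 := by positivity
        rw [show Real.sqrt (2/Real.pi) * t ^ (-(3:ℝ)/2) * (t/2) * Real.sqrt (Real.pi / (1/(2*t)))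
          = t ^ (-(3:ℝ)/2) * (t/2) * (Real.sqrt (2/Real.pi) * Real.sqrt (Real.pi / (1/(2*t)))) by ring,
          hs1]
        field_simp
    _ = 1 := by rw [hs1, hs2, hs3]; field_simp
end
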